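/- arXiv:math/0612337 — 3 statements merged into one kernel-verified Lean document; each statement's English description precedes it below -/
import Mathlib

section
/- Let κ, σ : [0,∞) → (0,∞) and α : [0,∞) → ℝ be continuous, let x_0 ∈ ℝ, and let W̃ be a standard Brownian motion. Set K(t) = ∫_0^t κ(u)du, let γ : [0,∞) → ℝ be the solution of γ'(t) = κ(t)(α(t) − γ(t)) with γ(0) = α(0), set s(t) = ∫_0^t exp(2K(u))·σ(u)² du with inverse function t(·), and define the time-dependent Ornstein-Uhlenbeck process X_t := γ(t) + e^{−K(t)}(x_0 − γ(0) + W̃_{s(t)}) (the solution of dX_t = κ(t)(α(t) − X_t)dt + σ(t)dW_t, X_0 = x_0). Then for any T > 0 and any functions a, b : [0,T] → ℝ with a(0) < x_0 < b(0), P(a(t) < X_t < b(t) for all t ∈ [0,T]) = P(c(s) < W̃_s < d(s) for all s ∈ [0,S]), where c(s) = γ(0) − x_0 + (a(t(s)) − γ(t(s)))·exp(K(t(s))), d(s) = γ(0) − x_0 + (b(t(s)) − γ(t(s)))·exp(K(t(s))), and S = s(T). -/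
/-!
The two events coincide path by path. The clock `s` is a primitive of the nonnegative
continuous function `exp (2 K) σ²`, hence nondecreasing, so together with its inverse `tinv`
it matches `[0, T]` with `[0, s T]`, and the substitution `t = tinv u` turns a condition for
all `t ∈ [0, T]` into one for all `u ∈ [0, s T]`. At each time, `X t` is an affine function of
`W (s t)` with positive slope `exp (-K t)`, so the two-sided bound on `X t` is equivalent to
one on `W (s t)`.
-/

open MeasureTheory ProbabilityTheory Filter Set

/-- A standard Brownian motion on `[0,∞)`: a process with (a.s.) continuous paths,
`W 0 = 0` a.s., centered Gaussian increments of variance `t - u`, and independent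
increments. -/
structure IsStandardBM {Ω : Type*} [MeasureSpace Ω] (W : ℝ → Ω → ℝ) : Prop where
  meas : ∀ t : ℝ, Measurable (W t)
  init : ∀ᵐ ω : Ω ∂ℙ, W 0 ω = 0
  cont : ∀ᵐ ω : Ω ∂ℙ, ContinuousOn (fun t => W t ω) (Set.Ici 0)
  gauss_incr : ∀ u t : ℝ, 0 ≤ u → u ≤ t →
    Measure.map (fun ω => W t ω - W u ω) ℙ = gaussianReal 0 (Real.toNNReal (t - u))
  indep_incr : ∀ (n : ℕ) (τ : Fin (n + 1) → ℝ), (∀ i, 0 ≤ τ i) → Monotone τ →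
    iIndepFun (m := fun _ => Real.measurableSpace)
      (fun i : Fin n => fun ω => W (τ i.succ) ω - W (τ i.castSucc) ω) ℙ

lemma monotone_primitive_of_nonneg {f : ℝ → ℝ} (hf : ∀ a b, IntervalIntegrable f volume a b)
    (hf_nonneg : 0 ≤ f) (a : ℝ) : Monotone fun b => ∫ x in a..b, f x := by
  intro b c hbc
  rw [← sub_nonneg, intervalIntegral.integral_interval_sub_left (hf a c) (hf a b)]
  exact intervalIntegral.integral_nonneg hbc fun x _ => hf_nonneg x

lemma image_Icc_of_leftInverse {s tinv : ℝ → ℝ} (hs : MonotoneOn s (Ici 0)) (hs0 : s 0 = 0)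
    (h_left : ∀ t, 0 ≤ t → tinv (s t) = t) (h_right : ∀ u, 0 ≤ u → 0 ≤ tinv u ∧ s (tinv u) = u)
    {T : ℝ} (hT : 0 ≤ T) : tinv '' Icc 0 (s T) = Icc 0 T := by
  ext t
  constructor
  · rintro ⟨u, ⟨hu0, huT⟩, rfl⟩
    obtain ⟨ht0, hst⟩ := h_right u hu0
    refine ⟨ht0, le_of_not_gt fun hTt => hTt.ne ?_⟩
    have hu : u = s T := le_antisymm huT (hst ▸ hs hT ht0 hTt.le)
    rw [hu, h_left T hT]
  · rintro ⟨ht0, htT⟩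
    refine ⟨s t, ⟨?_, hs ht0 (ht0.trans htT) htT⟩, h_left t ht0⟩
    exact hs0 ▸ hs self_mem_Ici ht0 ht0

lemma lt_affine_exp_iff (A g k x₀ g₀ w : ℝ) :
    A < g + Real.exp (-k) * (x₀ - g₀ + w) ↔ g₀ - x₀ + (A - g) * Real.exp k < w := by
  rw [← sub_lt_iff_lt_add', Real.exp_neg, ← div_eq_inv_mul, lt_div_iff₀ (Real.exp_pos k)]
  constructor <;> intro h <;> linarith

lemma affine_exp_lt_iff (B g k x₀ g₀ w : ℝ) :
    g + Real.exp (-k) * (x₀ - g₀ + w) < B ↔ w < g₀ - x₀ + (B - g) * Real.exp k := by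
  rw [← lt_sub_iff_add_lt', Real.exp_neg, ← div_eq_inv_mul, div_lt_iff₀ (Real.exp_pos k)]
  constructor <;> intro h <;> linarith

theorem bcp_ou_time_dependent_general
    {Ω : Type*} [MeasureSpace Ω]
    (κ σf γ : ℝ → ℝ)
    (hκ_cont : Continuous κ)
    (hσ_cont : Continuous σf)
    (K : ℝ → ℝ) (hK : ∀ t : ℝ, K t = ∫ u in (0:ℝ)..t, κ u)
    (s tinv : ℝ → ℝ)
    (hs : ∀ t : ℝ, s t = ∫ u in (0:ℝ)..t, Real.exp (2 * K u) * (σf u) ^ 2)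
    (htinv_left : ∀ t : ℝ, 0 ≤ t → tinv (s t) = t)
    (htinv_right : ∀ u : ℝ, 0 ≤ u → 0 ≤ tinv u ∧ s (tinv u) = u)
    (W : ℝ → Ω → ℝ) (x₀ : ℝ)
    (X : ℝ → Ω → ℝ)
    (hX : ∀ (t : ℝ) (ω : Ω), X t ω = γ t + Real.exp (-K t) * (x₀ - γ 0 + W (s t) ω))
    (T : ℝ) (hT : 0 < T)
    (a b : ℝ → ℝ)
    (S : ℝ) (hS : S = s T) :
    ℙ {ω : Ω | ∀ t ∈ Set.Icc (0 : ℝ) T, a t < X t ω ∧ X t ω < b t} =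
      ℙ {ω : Ω | ∀ u ∈ Set.Icc (0 : ℝ) S,
        γ 0 - x₀ + (a (tinv u) - γ (tinv u)) * Real.exp (K (tinv u)) < W u ω ∧
        W u ω < γ 0 - x₀ + (b (tinv u) - γ (tinv u)) * Real.exp (K (tinv u))} := by
  have hK_cont : Continuous K := by
    rw [funext hK]
    exact intervalIntegral.continuous_primitive (hκ_cont.intervalIntegrable ·) 0
  have hs_mono : Monotone s := by
    have hf : Continuous fun u => Real.exp (2 * K u) * σf u ^ 2 := by fun_prop
    rw [funext hs]
    exact monotone_primitive_of_nonneg (hf.intervalIntegrable ·) (fun u => by positivity) 0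
  have hs0 : s 0 = 0 := by rw [hs, intervalIntegral.integral_same]
  rw [← image_Icc_of_leftInverse (hs_mono.monotoneOn _) hs0 htinv_left htinv_right hT.le, ← hS]
  congr 1
  ext ω
  simp only [forall_mem_image, hX, lt_affine_exp_iff, affine_exp_lt_iff]
  refine forall₂_congr fun u hu => ?_
  rw [(htinv_right u hu.1).2]

/-- Boundary crossing probabilities for the Ornstein-Uhlenbeck process with
time-dependent coefficients, reduced to boundary crossing probabilities for a
standard Brownian motion. -/
theorem bcp_ou_time_dependent
    {Ω : Type*} [MeasureSpace Ω] [IsProbabilityMeasure (ℙ : Measure Ω)]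
    (κ σf α γ : ℝ → ℝ)
    (hκ_cont : Continuous κ) (hκ_pos : ∀ t : ℝ, 0 < κ t)
    (hσ_cont : Continuous σf) (hσ_pos : ∀ t : ℝ, 0 < σf t)
    (hα_cont : Continuous α)
    (K : ℝ → ℝ) (hK : ∀ t : ℝ, K t = ∫ u in (0:ℝ)..t, κ u)
    (hγ : ∀ t : ℝ, 0 ≤ t → HasDerivAt γ (κ t * (α t - γ t)) t) (hγ0 : γ 0 = α 0)
    (s tinv : ℝ → ℝ)
    (hs : ∀ t : ℝ, s t = ∫ u in (0:ℝ)..t, Real.exp (2 * K u) * (σf u) ^ 2)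
    (htinv_left : ∀ t : ℝ, 0 ≤ t → tinv (s t) = t)
    (htinv_right : ∀ u : ℝ, 0 ≤ u → 0 ≤ tinv u ∧ s (tinv u) = u)
    (W : ℝ → Ω → ℝ) (hW : IsStandardBM W) (x₀ : ℝ)
    (X : ℝ → Ω → ℝ)
    (hX : ∀ (t : ℝ) (ω : Ω), X t ω = γ t + Real.exp (-K t) * (x₀ - γ 0 + W (s t) ω))
    (T : ℝ) (hT : 0 < T)
    (a b : ℝ → ℝ) (ha0 : a 0 < x₀) (hb0 : x₀ < b 0)
    (S : ℝ) (hS : S = s T) :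
    ℙ {ω : Ω | ∀ t ∈ Set.Icc (0 : ℝ) T, a t < X t ω ∧ X t ω < b t} =
      ℙ {ω : Ω | ∀ u ∈ Set.Icc (0 : ℝ) S,
        γ 0 - x₀ + (a (tinv u) - γ (tinv u)) * Real.exp (K (tinv u)) < W u ω ∧
        W u ω < γ 0 - x₀ + (b (tinv u) - γ (tinv u)) * Real.exp (K (tinv u))} :=
  bcp_ou_time_dependent_general κ σf γ hκ_cont hσ_cont K hK s tinv hs htinv_left htinv_right W x₀ X
    hX T hT a b S hS
end

section
/- Let α, β, σ > 0 and x_0 > 0, and let W̃ be a standard Brownian motion. Define f(t,x) = (e^{βt}/σ)(log x + (σ² − 2α)/(2β)) for x > 0, s(t) = (e^{2βt} − 1)/(2β) with inverse t(s) = (1/(2β)) log(1 + 2βs), and the growth process X_t := exp( σ e^{−βt}( f(0,x_0) + W̃_{s(t)} ) − (σ² − 2α)/(2β) ), i.e., the positive process determined by f(t, X_t) = f(0, x_0) + W̃_{s(t)} (the solution of dX_t = (αX_t − βX_t log X_t)dt + σX_t dW_t, X_0 = x_0). Then for any T > 0 and any functions a, b : [0,T] → (0,∞) with a(0) < x_0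 < b(0), P(a(t) < X_t < b(t) for all t ∈ [0,T]) = P(c(s) < W̃_s < d(s) for all s ∈ [0,S]), where c(s) = (√(1+2βs)/σ)(log a(t(s)) + (σ²−2α)/(2β)) − (1/σ)(log x_0 + (σ²−2α)/(2β)), d(s) = (√(1+2βs)/σ)(log b(t(s)) + (σ²−2α)/(2β)) − (1/σ)(log x_0 + (σ²−2α)/(2β)), and S = (e^{2βT} − 1)/(2β). -/
/-!
The two events coincide path by path. Since `x ↦ f t x` is an increasing bijection of `(0, ∞)`
onto `ℝ`, `a t < X t < b t` is equivalent to `f t (a t) - f 0 x₀ < W (s t) < f t (b t) - f 0 x₀`.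
The clock `s` maps `[0, T]` increasingly onto `[0, S]` with inverse `tinv`, and
`√(1 + 2 β s t) = exp (β t)`, so substituting `u = s t` turns these bounds into `c u` and `d u`.
-/

open MeasureTheory ProbabilityTheory Filter Set

open Real

noncomputable def timeChange (β t : ℝ) : ℝ := (exp (2 * β * t) - 1) / (2 * β)

lemma monotone_timeChange {β : ℝ} (hβ : 0 < β) : Monotone (timeChange β) := fun x y hxy => by
  unfold timeChange
  gcongr

lemma timeChange_image_Icc {β T : ℝ} (hβ : 0 < β) (hT : 0 ≤ T) :
    timeChange β '' Icc 0 T = Icc 0 (timeChange β T) := by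
  have hcont : Continuous (timeChange β) := by unfold timeChange; fun_prop
  rw [hcont.continuousOn.image_Icc_of_monotoneOn hT ((monotone_timeChange hβ).monotoneOn _)]
  simp [timeChange]

lemma one_add_mul_timeChange {β : ℝ} (hβ : β ≠ 0) (t : ℝ) :
    1 + 2 * β * timeChange β t = exp (2 * β * t) := by
  unfold timeChange
  field_simp
  ring

lemma sqrt_one_add_mul_timeChange {β : ℝ} (hβ : β ≠ 0) (t : ℝ) :
    √(1 + 2 * β * timeChange β t) = exp (β * t) := by
  rw [one_add_mul_timeChange hβ, show 2 * β * t = β * t + β * t by ring, exp_add,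
    sqrt_mul_self (exp_pos _).le]

lemma log_one_add_mul_timeChange {β : ℝ} (hβ : β ≠ 0) (t : ℝ) :
    1 / (2 * β) * log (1 + 2 * β * timeChange β t) = t := by
  rw [one_add_mul_timeChange hβ, log_exp]
  field_simp

lemma lt_exp_affine_iff {a k c κ w : ℝ} (ha : 0 < a) (hk : 0 < k) :
    a < exp (k * (c + w) - κ) ↔ (log a + κ) / k - c < w := by
  rw [← log_lt_iff_lt_exp ha, sub_lt_iff_lt_add', lt_sub_iff_add_lt, div_lt_iff₀ hk, mul_comm k]

lemma exp_affine_lt_iff {b k c κ w : ℝ} (hb : 0 < b) (hk : 0 < k) :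
    exp (k * (c + w) - κ) < b ↔ w < (log b + κ) / k - c := by
  rw [← lt_log_iff_exp_lt hb, lt_sub_iff_add_lt', sub_lt_iff_lt_add, lt_div_iff₀ hk, mul_comm k]

theorem bcp_growth_process_general
    {Ω : Type*} [MeasureSpace Ω]
    (α β σ x₀ : ℝ) (hβ : 0 < β) (hσ : 0 < σ)
    (W : ℝ → Ω → ℝ)
    (f : ℝ → ℝ → ℝ)
    (hf : ∀ t x : ℝ, f t x =
      (Real.exp (β * t) / σ) * (Real.log x + (σ ^ 2 - 2 * α) / (2 * β)))
    (s tinv : ℝ → ℝ)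
    (hs : ∀ t : ℝ, s t = (Real.exp (2 * β * t) - 1) / (2 * β))
    (htinv : ∀ u : ℝ, tinv u = (1 / (2 * β)) * Real.log (1 + 2 * β * u))
    (X : ℝ → Ω → ℝ)
    (hX : ∀ (t : ℝ) (ω : Ω), X t ω =
      Real.exp (σ * Real.exp (-β * t) * (f 0 x₀ + W (s t) ω) - (σ ^ 2 - 2 * α) / (2 * β)))
    (T : ℝ) (hT : 0 < T)
    (a b : ℝ → ℝ) (ha_pos : ∀ t ∈ Set.Icc (0 : ℝ) T, 0 < a t)
    (hb_pos : ∀ t ∈ Set.Icc (0 : ℝ) T, 0 < b t)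
    (S : ℝ) (hS : S = (Real.exp (2 * β * T) - 1) / (2 * β)) :
    ℙ {ω : Ω | ∀ t ∈ Set.Icc (0 : ℝ) T, a t < X t ω ∧ X t ω < b t} =
      ℙ {ω : Ω | ∀ u ∈ Set.Icc (0 : ℝ) S,
        (Real.sqrt (1 + 2 * β * u) / σ) *
            (Real.log (a (tinv u)) + (σ ^ 2 - 2 * α) / (2 * β)) -
          (1 / σ) * (Real.log x₀ + (σ ^ 2 - 2 * α) / (2 * β)) < W u ω ∧
        W u ω < (Real.sqrt (1 + 2 * β * u) / σ) *
            (Real.log (b (tinv u)) + (σ ^ 2 - 2 * α) / (2 * β)) -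
          (1 / σ) * (Real.log x₀ + (σ ^ 2 - 2 * α) / (2 * β))} := by
  obtain rfl : s = timeChange β := funext hs
  obtain rfl : S = timeChange β T := hS
  have hk (t : ℝ) : 0 < σ * exp (-β * t) := by positivity
  have rescale (t L : ℝ) : (L + (σ ^ 2 - 2 * α) / (2 * β)) / (σ * exp (-β * t)) =
      exp (β * t) / σ * (L + (σ ^ 2 - 2 * α) / (2 * β)) := by
    rw [neg_mul, exp_neg]
    field_simp
  have hf0 : f 0 x₀ = 1 / σ * (log x₀ + (σ ^ 2 - 2 * α) / (2 * β)) := by simp [hf]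
  congr 1
  ext ω
  rw [← timeChange_image_Icc hβ hT.le, mem_ofPred_eq, mem_ofPred_eq, forall_mem_image]
  refine forall₂_congr fun t ht => ?_
  rw [htinv, log_one_add_mul_timeChange hβ.ne', sqrt_one_add_mul_timeChange hβ.ne', hX,
    lt_exp_affine_iff (ha_pos t ht) (hk t), exp_affine_lt_iff (hb_pos t ht) (hk t), rescale,
    rescale, hf0]

/-- Boundary crossing probabilities for the growth process, reduced to boundary
crossing probabilities for a standard Brownian motion. -/
theorem bcp_growth_process
    {Ω : Type*} [MeasureSpace Ω] [IsProbabilityMeasure (ℙ : Measure Ω)]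
    (α β σ x₀ : ℝ) (hα : 0 < α) (hβ : 0 < β) (hσ : 0 < σ) (hx₀ : 0 < x₀)
    (W : ℝ → Ω → ℝ) (hW : IsStandardBM W)
    (f : ℝ → ℝ → ℝ)
    (hf : ∀ t x : ℝ, f t x =
      (Real.exp (β * t) / σ) * (Real.log x + (σ ^ 2 - 2 * α) / (2 * β)))
    (s tinv : ℝ → ℝ)
    (hs : ∀ t : ℝ, s t = (Real.exp (2 * β * t) - 1) / (2 * β))
    (htinv : ∀ u : ℝ, tinv u = (1 / (2 * β)) * Real.log (1 + 2 * β * u))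
    (X : ℝ → Ω → ℝ)
    (hX : ∀ (t : ℝ) (ω : Ω), X t ω =
      Real.exp (σ * Real.exp (-β * t) * (f 0 x₀ + W (s t) ω) - (σ ^ 2 - 2 * α) / (2 * β)))
    (T : ℝ) (hT : 0 < T)
    (a b : ℝ → ℝ) (ha_pos : ∀ t ∈ Set.Icc (0 : ℝ) T, 0 < a t)
    (hb_pos : ∀ t ∈ Set.Icc (0 : ℝ) T, 0 < b t)
    (ha0 : a 0 < x₀) (hb0 : x₀ < b 0)
    (S : ℝ) (hS : S = (Real.exp (2 * β * T) - 1) / (2 * β)) :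
    ℙ {ω : Ω | ∀ t ∈ Set.Icc (0 : ℝ) T, a t < X t ω ∧ X t ω < b t} =
      ℙ {ω : Ω | ∀ u ∈ Set.Icc (0 : ℝ) S,
        (Real.sqrt (1 + 2 * β * u) / σ) *
            (Real.log (a (tinv u)) + (σ ^ 2 - 2 * α) / (2 * β)) -
          (1 / σ) * (Real.log x₀ + (σ ^ 2 - 2 * α) / (2 * β)) < W u ω ∧
        W u ω < (Real.sqrt (1 + 2 * β * u) / σ) *
            (Real.log (b (tinv u)) + (σ ^ 2 - 2 * α) / (2 * β)) -
          (1 / σ) * (Real.log x₀ + (σ ^ 2 - 2 * α) / (2 * β))} :=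
  bcp_growth_process_general α β σ x₀ hβ hσ W f hf s tinv hs htinv X hX T hT a b ha_pos hb_pos S hS
end

section
/- Let α, β, σ > 0 and x_0 > 0, let W̃ be a standard Brownian motion, and define the growth process X_t := exp( σ e^{−βt}( f(0,x_0) + W̃_{s(t)} ) − (σ² − 2α)/(2β) ), where f(t,x) = (e^{βt}/σ)(log x + (σ²−2α)/(2β)) and s(t) = (e^{2βt}−1)/(2β). Let h ∈ ℝ satisfy h > log x_0 + (σ² − 2α)/(2β), and let T > 0. Then P( X_t < exp( h e^{−βt} − (σ²−2α)/(2β) ) for all t ∈ [0,T] ) = 2·Φ( (2β(h − log x_0) − σ² + 2α) / (σ √(2β(e^{2βT}−1))) ) − 1, where Φ is the standard normal distribution function. -/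
open MeasureTheory ProbabilityTheory Filter Set

/-- The standard normal cumulative distribution function `Φ`. -/
noncomputable def stdNormalCDF (x : ℝ) : ℝ :=
  (ProbabilityTheory.gaussianReal 0 1 (Set.Iic x)).toReal

open scoped NNReal ENNReal Topology

/-!
Under the time change `u = s t` the growth process stays below the boundary exactly when `W`
stays below the level `a = h / σ - f 0 x₀ > 0` on `[0, s T]`, so the theorem is the reflection
principle `P (max_{[0, S]} W < a) = 2 Φ (a / √S) - 1`.

The reflection principle is proved on the dyadic grids of mesh `S / 2 ^ n`. If the walk `Y` first
exceeds `a` at step `k`, its past is independent of the remaining increment `W S - W tₖ`, a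
centered Gaussian, so reflecting that increment preserves the joint law. This gives the exact
identity `P (grid crossing) + P (overshoot) = 2 P (W S - W 0 > a)`, where on the overshoot event
the end point lies in `(a, 2 Yₖ - a)`; its probability tends to `0` because the paths are
uniformly continuous. Continuity of the paths and the absence of atoms of the Gaussian law then
pass from the grids to the whole interval.
-/

lemma Fin.measurable_partialSum {M : Type*} [AddMonoid M] [MeasurableSpace M] [MeasurableAdd₂ M]
    {n : ℕ} : Measurable (Fin.partialSum : (Fin n → M) → Fin (n + 1) → M) := by
  refine measurable_pi_lambda _ fun i => ?_
  induction i using Fin.induction with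
  | zero => simpa only [Fin.partialSum_zero] using measurable_const
  | succ j ih =>
    simp only [Fin.partialSum_succ]
    exact ih.add (measurable_pi_apply j)

lemma ProbabilityTheory.iIndepFun.indepFun_init_last {Ω β : Type*} {_ : MeasurableSpace Ω}
    [MeasurableSpace β] {μ : Measure Ω} {k : ℕ} {f : Fin (k + 1) → Ω → β}
    (h : iIndepFun f μ) (hf : ∀ i, Measurable (f i)) :
    IndepFun (fun ω (i : Fin k) => f i.castSucc ω) (f (Fin.last k)) μ := by
  set I : Finset (Fin (k + 1)) := Finset.univ.map Fin.castSuccEmb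
  set J : Finset (Fin (k + 1)) := {Fin.last k}
  have hsplit := h.indepFun_finset I J (by simp [I, J, Finset.disjoint_singleton_right]) hf
  exact hsplit.comp (φ := fun (g : I → β) (i : Fin k) => g ⟨Fin.castSucc i, by simp [I]⟩)
    (ψ := fun (g : J → β) => g ⟨Fin.last k, by simp [J]⟩) (by fun_prop) (by fun_prop)

lemma MeasureTheory.tendsto_measure_Ioi_of_tendsto_of_lt {μ : Measure ℝ} [IsFiniteMeasure μ]
    [NullSingletonClass μ] {a : ℝ} {b : ℕ → ℝ} (hb : Monotone b) (hba : ∀ m, b m < a)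
    (hlim : Tendsto b atTop (𝓝 a)) :
    Tendsto (fun m => μ (Ioi (b m))) atTop (𝓝 (μ (Ioi a))) := by
  have hInter : ⋂ m, Ioi (b m) = Ici a := by
    ext x
    simp only [mem_iInter, mem_Ioi, mem_Ici]
    exact ⟨fun h => le_of_tendsto' hlim fun m => (h m).le, fun h m => (hba m).trans_le h⟩
  rw [measure_congr Ioi_ae_eq_Ici, ← hInter]
  exact tendsto_measure_iInter_atTop (fun m => measurableSet_Ioi.nullMeasurableSet)
    (fun m m' h => Ioi_subset_Ioi (hb h)) ⟨0, measure_ne_top μ _⟩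

lemma natCast_mul_div_two_pow_le {S : ℝ} (hS : 0 ≤ S) {n k : ℕ} (hk : k ≤ 2 ^ n) :
    (k : ℝ) * S / 2 ^ n ≤ S := by
  rw [div_le_iff₀ (by positivity), mul_comm S]
  exact mul_le_mul_of_nonneg_right (by exact_mod_cast hk) hS

lemma ContinuousOn.le_of_forall_dyadic_le {f : ℝ → ℝ} {S b : ℝ} (hS : 0 < S)
    (hf : ContinuousOn f (Icc 0 S)) (h : ∀ n k : ℕ, k ≤ 2 ^ n → f (k * S / 2 ^ n) ≤ b) {u : ℝ}
    (hu : u ∈ Icc 0 S) : f u ≤ b := by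
  set k : ℕ → ℕ := fun n => ⌊u * 2 ^ n / S⌋₊
  have hk_le : ∀ n, k n ≤ 2 ^ n := fun n => Nat.floor_le_of_le <| by
    rw [div_le_iff₀ hS]; push_cast; nlinarith [hu.2, show (0 : ℝ) < 2 ^ n by positivity]
  have hk_near : ∀ n, u - S / 2 ^ n ≤ k n * S / 2 ^ n ∧ k n * S / 2 ^ n ≤ u := fun n => by
    have h2n : (0 : ℝ) < 2 ^ n := by positivity
    have hlo : u * 2 ^ n < (k n + 1) * S :=
      (div_lt_iff₀ hS).1 (Nat.lt_floor_add_one (u * 2 ^ n / S))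
    have hhi : (k n : ℝ) * S ≤ u * 2 ^ n :=
      (le_div_iff₀ hS).1 (Nat.floor_le (by have := hu.1; positivity))
    constructor
    · rw [sub_le_iff_le_add, ← add_div, le_div_iff₀ h2n]; linarith
    · rw [div_le_iff₀ h2n]; linarith
  have hmesh : Tendsto (fun n : ℕ => u - S / 2 ^ n) atTop (𝓝 u) := by
    simpa using (tendsto_const_nhds (x := u)).sub
      ((tendsto_const_nhds (x := S)).div_atTop (tendsto_pow_atTop_atTop_of_one_lt one_lt_two))
  have hlim : Tendsto (fun n => (k n : ℝ) * S / 2 ^ n) atTop (𝓝[Icc 0 S] u) :=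
    tendsto_nhdsWithin_iff.2 ⟨tendsto_of_tendsto_of_tendsto_of_le_of_le hmesh tendsto_const_nhds
      (fun n => (hk_near n).1) (fun n => (hk_near n).2),
      Eventually.of_forall fun n => ⟨by positivity, natCast_mul_div_two_pow_le hS.le (hk_le n)⟩⟩
  exact le_of_tendsto ((hf u hu).tendsto.comp hlim)
    (Eventually.of_forall fun n => h n (k n) (hk_le n))

lemma ContinuousOn.forall_mem_Icc_comp_iff {s : ℝ → ℝ} {a b : ℝ} {p : ℝ → Prop} (hab : a ≤ b)
    (hs : ContinuousOn s (Icc a b)) (hmono : MonotoneOn s (Icc a b)) :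
    (∀ t ∈ Icc a b, p (s t)) ↔ ∀ u ∈ Icc (s a) (s b), p u := by
  rw [← hmono.image_Icc_subset.antisymm (intermediate_value_Icc hab hs), forall_mem_image]

lemma gaussianReal_Iic_eq_stdGaussian {S : ℝ} (hS : 0 < S) (a : ℝ) :
    gaussianReal 0 S.toNNReal (Iic a) = gaussianReal 0 1 (Iic (a / √S)) := by
  have hlaw := gaussianReal_map_const_mul (μ := 0) (v := 1) √S
  have hv : NNReal.mk (√S ^ 2) (sq_nonneg _) * 1 = S.toNNReal := by ext; simp [hS.le]
  rw [mul_zero, hv] at hlaw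
  rw [← hlaw, Measure.map_apply (measurable_const_mul _) measurableSet_Iic]
  congr 1
  ext x
  simp [le_div_iff₀ (Real.sqrt_pos.2 hS), mul_comm]

lemma gaussianReal_real_Ioi {S : ℝ} (hS : 0 < S) (a : ℝ) :
    (gaussianReal 0 S.toNNReal).real (Ioi a) = 1 - stdNormalCDF (a / √S) := by
  rw [← compl_Iic, probReal_compl_eq_one_sub measurableSet_Iic, measureReal_def,
    gaussianReal_Iic_eq_stdGaussian hS]
  rfl

lemma growth_level_div_sqrt_eq {α β σ L h E : ℝ} (hβ : 0 < β) (hσ : 0 < σ) (hE : 1 < E) :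
    (h / σ - (L + (σ ^ 2 - 2 * α) / (2 * β)) / σ) / √((E - 1) / (2 * β)) =
      (2 * β * (h - L) - σ ^ 2 + 2 * α) / (σ * √(2 * β * (E - 1))) := by
  have hr : √(2 * β) ^ 2 = 2 * β := Real.sq_sqrt (by positivity)
  have hr0 : 0 < √(2 * β) := by positivity
  have hq0 : 0 < √(E - 1) := Real.sqrt_pos.2 (by linarith)
  rw [Real.sqrt_div (by linarith), Real.sqrt_mul (show 0 ≤ 2 * β by positivity)]
  generalize √(2 * β) = r at hr hr0 ⊢
  generalize √(E - 1) = q at hq0 ⊢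
  field_simp
  linear_combination (2 * β * (h - L) - σ ^ 2 + 2 * α) * hr

section DyadicWalk

variable {Ω : Type*}

noncomputable def dyadicWalk (W : ℝ → Ω → ℝ) (S : ℝ) (n k : ℕ) (ω : Ω) : ℝ :=
  W (k * S / 2 ^ n) ω - W 0 ω

def firstPassage (W : ℝ → Ω → ℝ) (S a : ℝ) (n k : ℕ) : Set Ω :=
  {ω | (∀ j < k, dyadicWalk W S n j ω ≤ a) ∧ a < dyadicWalk W S n k ω}

def dyadicCrossing (W : ℝ → Ω → ℝ) (S a : ℝ) (n : ℕ) : Set Ω :=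
  {ω | ∃ k ≤ 2 ^ n, a < dyadicWalk W S n k ω}

def overshoot (W : ℝ → Ω → ℝ) (S a : ℝ) (n : ℕ) : Set Ω :=
  ⋃ k ∈ Finset.range (2 ^ n + 1), firstPassage W S a n k ∩
    {ω | a < dyadicWalk W S n (2 ^ n) ω ∧
      a < 2 * dyadicWalk W S n k ω - dyadicWalk W S n (2 ^ n) ω}

variable {W : ℝ → Ω → ℝ} {S a : ℝ} {n k : ℕ}

@[simp]
lemma dyadicWalk_zero : dyadicWalk W S n 0 = 0 := by
  ext ω; simp [dyadicWalk]

lemma dyadicWalk_two_pow (ω : Ω) : dyadicWalk W S n (2 ^ n) ω = W S ω - W 0 ω := by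
  simp [dyadicWalk]

lemma dyadicWalk_succ_two_mul : dyadicWalk W S (n + 1) (2 * k) = dyadicWalk W S n k := by
  ext ω; simp only [dyadicWalk]; congr 2; push_cast; ring

lemma firstPassage_disjoint {j : ℕ} (hjk : j ≠ k) :
    Disjoint (firstPassage W S a n j) (firstPassage W S a n k) := by
  rw [Set.disjoint_left]
  rintro ω ⟨hj_le, hj_gt⟩ ⟨hk_le, hk_gt⟩
  rcases hjk.lt_or_gt with h | h
  · exact (hk_le j h).not_gt hj_gt
  · exact (hj_le k h).not_gt hk_gt

lemma biUnion_firstPassage :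
    ⋃ k ∈ Finset.range (2 ^ n + 1), firstPassage W S a n k = dyadicCrossing W S a n := by
  classical
  ext ω
  simp only [mem_iUnion, Finset.mem_range, Nat.lt_succ_iff, dyadicCrossing, mem_ofPred_eq]
  constructor
  · rintro ⟨k, hk, -, hgt⟩
    exact ⟨k, hk, hgt⟩
  · rintro ⟨k, hk, hgt⟩
    have hex : ∃ j, a < dyadicWalk W S n j ω := ⟨k, hgt⟩
    exact ⟨Nat.find hex, (Nat.find_min' hex hgt).trans hk,
      fun j hj => not_lt.1 (Nat.find_min hex hj), Nat.find_spec hex⟩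

lemma monotone_dyadicCrossing : Monotone (dyadicCrossing W S a) := by
  refine monotone_nat_of_le_succ fun n ω ⟨k, hk, hgt⟩ => ⟨2 * k, ?_, ?_⟩
  · rw [pow_succ]; omega
  · rwa [dyadicWalk_succ_two_mul]

variable [MeasureSpace Ω]

lemma measurable_dyadicWalk (hW : IsStandardBM W) : Measurable (dyadicWalk W S n k) :=
  (hW.meas _).sub (hW.meas _)

lemma measurableSet_firstPassage (hW : IsStandardBM W) :
    MeasurableSet (firstPassage W S a n k) := by
  have : firstPassage W S a n k =
      (⋂ j ∈ Iio k, {ω | dyadicWalk W S n j ω ≤ a}) ∩ {ω | a < dyadicWalk W S n k ω} := by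
    ext ω; simp [firstPassage]
  rw [this]
  exact (MeasurableSet.biInter (to_countable _) fun j _ =>
    measurableSet_le (measurable_dyadicWalk hW) measurable_const).inter
    (measurableSet_lt measurable_const (measurable_dyadicWalk hW))

lemma measurableSet_dyadicCrossing (hW : IsStandardBM W) :
    MeasurableSet (dyadicCrossing W S a n) := by
  rw [← biUnion_firstPassage]
  exact Finset.measurableSet_biUnion _ fun k _ => measurableSet_firstPassage hW

lemma measurableSet_overshoot (hW : IsStandardBM W) : MeasurableSet (overshoot W S a n) :=
  Finset.measurableSet_biUnion _ fun _ _ => (measurableSet_firstPassage hW).inter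
    ((measurableSet_lt measurable_const (measurable_dyadicWalk hW)).inter
      (measurableSet_lt measurable_const
        ((measurable_dyadicWalk hW).const_mul 2 |>.sub (measurable_dyadicWalk hW))))

lemma measure_biUnion_firstPassage_inter (hW : IsStandardBM W) {B : ℕ → Set Ω}
    (hB : ∀ k, MeasurableSet (B k)) :
    ℙ (⋃ k ∈ Finset.range (2 ^ n + 1), firstPassage W S a n k ∩ B k) =
      ∑ k ∈ Finset.range (2 ^ n + 1), ℙ (firstPassage W S a n k ∩ B k) :=
  measure_biUnion_finset (fun _ _ _ _ hjk => (firstPassage_disjoint hjk).mono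
    inter_subset_left inter_subset_left) fun k _ => (measurableSet_firstPassage hW).inter (hB k)

end DyadicWalk

section Reflection

variable {Ω : Type*} [MeasureSpace Ω] {W : ℝ → Ω → ℝ} {S a : ℝ} {n k : ℕ}

lemma IsStandardBM.isProbabilityMeasure (hW : IsStandardBM W) :
    IsProbabilityMeasure (ℙ : Measure Ω) :=
  (hW.indep_incr 0 (fun _ => 0) (fun _ => le_rfl) monotone_const).isProbabilityMeasure

lemma IsStandardBM.indepFun_dyadicWalk_increment (hW : IsStandardBM W) (hS : 0 ≤ S)
    (hk : k ≤ 2 ^ n) :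
    IndepFun (fun ω (j : Fin (k + 1)) => dyadicWalk W S n j ω)
      (fun ω => W S ω - W (k * S / 2 ^ n) ω) ℙ := by
  set τ : Fin (k + 2) → ℝ := fun i => if (i : ℕ) ≤ k then (i : ℕ) * S / 2 ^ n else S
  have hτ_nonneg : ∀ i, 0 ≤ τ i := fun i => by simp only [τ]; split_ifs <;> positivity
  have hτ_mono : Monotone τ := by
    intro i j hij
    simp only [τ]
    split_ifs with hi hj hj
    · gcongr; exact_mod_cast hij
    · exact natCast_mul_div_two_pow_le hS (hi.trans hk)
    · exact absurd ((Fin.le_def.mp hij).trans hj) hi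
    · exact le_rfl
  have hind := (hW.indep_incr (k + 1) τ hτ_nonneg hτ_mono).indepFun_init_last
    fun i => (hW.meas _).sub (hW.meas _)
  convert hind.comp Fin.measurable_partialSum measurable_id using 1
  · ext ω j
    induction j using Fin.induction with
    | zero => simp
    | succ j ih =>
      rw [Function.comp_apply] at ih ⊢
      rw [Fin.partialSum_succ, ← ih]
      simp [τ, dyadicWalk]
  · ext ω; simp [τ]

lemma IsStandardBM.identDistrib_neg_increment (hW : IsStandardBM W) {u t : ℝ} (hu : 0 ≤ u)
    (hut : u ≤ t) :
    IdentDistrib (fun ω => -(W t ω - W u ω)) (fun ω => W t ω - W u ω) ℙ ℙ where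
  aemeasurable_fst := ((hW.meas t).sub (hW.meas u)).neg.aemeasurable
  aemeasurable_snd := ((hW.meas t).sub (hW.meas u)).aemeasurable
  map_eq := by
    have hZ : Measurable fun ω => W t ω - W u ω := (hW.meas t).sub (hW.meas u)
    change Measure.map (Neg.neg ∘ fun ω => W t ω - W u ω) ℙ = _
    rw [← Measure.map_map measurable_neg hZ, hW.gauss_incr u t hu hut, gaussianReal_map_neg,
      neg_zero]

lemma IsStandardBM.measure_firstPassage_inter_reflect (hW : IsStandardBM W) (hS : 0 ≤ S)
    (hk : k ≤ 2 ^ n) :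
    ℙ (firstPassage W S a n k ∩ {ω | a < dyadicWalk W S n (2 ^ n) ω}) =
      ℙ (firstPassage W S a n k ∩
        {ω | a < 2 * dyadicWalk W S n k ω - dyadicWalk W S n (2 ^ n) ω}) := by
  have := hW.isProbabilityMeasure
  set past := fun ω (j : Fin (k + 1)) => dyadicWalk W S n j ω
  set Z := fun ω => W S ω - W (k * S / 2 ^ n) ω
  have hpast : Measurable past := measurable_pi_lambda _ fun j => measurable_dyadicWalk hW
  have hind := hW.indepFun_dyadicWalk_increment hS hk
  have hident : IdentDistrib (fun ω => (past ω, Z ω)) (fun ω => (past ω, -Z ω)) ℙ ℙ :=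
    (IdentDistrib.refl hpast.aemeasurable).prodMk
      (hW.identDistrib_neg_increment (by positivity) (natCast_mul_div_two_pow_le hS hk)).symm
      hind hind.neg_right
  set C : Set ((Fin (k + 1) → ℝ) × ℝ) :=
    {p | (∀ j : Fin k, p.1 j.castSucc ≤ a) ∧ a < p.1 (Fin.last k) ∧ a < p.1 (Fin.last k) + p.2}
  have hC : MeasurableSet C := by
    simp only [C, ofPred_and, ofPred_forall]
    refine (MeasurableSet.iInter fun j => measurableSet_le ?_ measurable_const).inter
      ((measurableSet_lt measurable_const ?_).inter (measurableSet_lt measurable_const ?_)) <;>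
    fun_prop
  have hpre : ∀ z : Ω → ℝ, (fun ω => (past ω, z ω)) ⁻¹' C = firstPassage W S a n k ∩
      {ω | a < dyadicWalk W S n k ω + z ω} := by
    intro z; ext ω; simp [C, past, firstPassage, Fin.forall_iff, and_assoc]
  have hsum : ∀ ω, dyadicWalk W S n k ω + Z ω = dyadicWalk W S n (2 ^ n) ω := fun ω => by
    rw [dyadicWalk_two_pow]; simp only [Z, dyadicWalk]; ring
  have hdiff : ∀ ω, dyadicWalk W S n k ω + -Z ω =
      2 * dyadicWalk W S n k ω - dyadicWalk W S n (2 ^ n) ω := fun ω => by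
    rw [← hsum]; ring
  have := hident.measure_mem_eq hC
  rw [hpre Z, hpre (fun ω => -Z ω)] at this
  simpa only [hsum, hdiff] using this

end Reflection

section Crossing

variable {Ω : Type*} [MeasureSpace Ω] {W : ℝ → Ω → ℝ} {S a : ℝ} {n k : ℕ}

lemma IsStandardBM.measure_firstPassage_add_overshoot (hW : IsStandardBM W) (hS : 0 ≤ S)
    (hk : k ≤ 2 ^ n) :
    ℙ (firstPassage W S a n k) + ℙ (firstPassage W S a n k ∩
      {ω | a < dyadicWalk W S n (2 ^ n) ω ∧
        a < 2 * dyadicWalk W S n k ω - dyadicWalk W S n (2 ^ n) ω}) =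
      2 * ℙ (firstPassage W S a n k ∩ {ω | a < dyadicWalk W S n (2 ^ n) ω}) := by
  set P := firstPassage W S a n k
  set G := {ω | a < dyadicWalk W S n (2 ^ n) ω}
  set R := {ω | a < 2 * dyadicWalk W S n k ω - dyadicWalk W S n (2 ^ n) ω}
  have hG : MeasurableSet G := measurableSet_lt measurable_const (measurable_dyadicWalk hW)
  have hR : MeasurableSet R := measurableSet_lt measurable_const
    (((measurable_dyadicWalk hW).const_mul 2).sub (measurable_dyadicWalk hW))
  -- after a first passage at `k`, ending at or below `a` forces the reflected end above `a`
  have hsplit : P ∩ R = (P \ G) ∪ (P ∩ (G ∩ R)) := by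
    ext ω
    constructor
    · rintro ⟨hP, hR⟩
      by_cases hG : ω ∈ G
      exacts [Or.inr ⟨hP, hG, hR⟩, Or.inl ⟨hP, hG⟩]
    · rintro (⟨hP, hG⟩ | ⟨hP, -, hR⟩)
      · have hend : dyadicWalk W S n (2 ^ n) ω ≤ a := not_lt.1 hG
        have hk : a < dyadicWalk W S n k ω := hP.2
        exact ⟨hP, show a < 2 * _ - _ by linarith⟩
      · exact ⟨hP, hR⟩
  have hdisj : Disjoint (P \ G) (P ∩ (G ∩ R)) :=
    disjoint_sdiff_left.mono_right (inter_subset_right.trans inter_subset_left)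
  calc ℙ P + ℙ (P ∩ (G ∩ R)) = ℙ (P ∩ G) + (ℙ (P \ G) + ℙ (P ∩ (G ∩ R))) := by
        rw [← measure_inter_add_sdiff P hG, add_assoc]
    _ = ℙ (P ∩ G) + ℙ (P ∩ G) := by
        rw [← measure_union hdisj ((measurableSet_firstPassage hW).inter (hG.inter hR)), ← hsplit,
          hW.measure_firstPassage_inter_reflect hS hk]
    _ = 2 * ℙ (P ∩ G) := (two_mul _).symm

lemma IsStandardBM.measure_dyadicCrossing_add_overshoot (hW : IsStandardBM W) (hS : 0 ≤ S) :
    ℙ (dyadicCrossing W S a n) + ℙ (overshoot W S a n) = 2 * ℙ {ω | a < W S ω - W 0 ω} := by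
  set G := {ω | a < dyadicWalk W S n (2 ^ n) ω}
  have hG : MeasurableSet G := measurableSet_lt measurable_const (measurable_dyadicWalk hW)
  have hcross := measure_biUnion_firstPassage_inter (S := S) (a := a) (n := n) hW
    (fun _ => MeasurableSet.univ)
  simp only [inter_univ, biUnion_firstPassage] at hcross
  have hend : {ω | a < W S ω - W 0 ω} =
      ⋃ k ∈ Finset.range (2 ^ n + 1), firstPassage W S a n k ∩ G := by
    have hsub : G ⊆ dyadicCrossing W S a n := fun ω hω => ⟨2 ^ n, le_rfl, hω⟩
    rw [← iUnion₂_inter, biUnion_firstPassage, inter_eq_right.2 hsub]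
    simp only [G, dyadicWalk_two_pow]
  rw [hend, measure_biUnion_firstPassage_inter hW fun _ => hG, hcross, overshoot,
    measure_biUnion_firstPassage_inter hW, ← Finset.sum_add_distrib, Finset.mul_sum]
  · exact Finset.sum_congr rfl fun k hk => hW.measure_firstPassage_add_overshoot hS
      (Nat.lt_succ_iff.1 (Finset.mem_range.1 hk))
  · exact fun k => hG.inter (measurableSet_lt measurable_const
      (((measurable_dyadicWalk hW).const_mul 2).sub (measurable_dyadicWalk hW)))

end Crossing

section Limit

variable {Ω : Type*} {W : ℝ → Ω → ℝ} {S a : ℝ}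

lemma eventually_notMem_overshoot {ω : Ω} (ha : 0 ≤ a) (hS : 0 ≤ S)
    (hcont : ContinuousOn (fun t => W t ω) (Icc 0 S)) :
    ∀ᶠ n in atTop, ω ∉ overshoot W S a n := by
  by_cases hend : a < W S ω - W 0 ω
  swap
  · refine Eventually.of_forall fun n hω => hend ?_
    simp only [overshoot, mem_iUnion, mem_inter_iff, mem_ofPred_eq] at hω
    obtain ⟨k, -, -, hN, -⟩ := hω
    rwa [dyadicWalk_two_pow] at hN
  -- on the overshoot event `Y_end - a < 2 (Yₖ - a) ≤ 2 (Yₖ - Yₖ₋₁)`, but fine steps are `< ε`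
  set ε := (W S ω - W 0 ω - a) / 2 with hε
  obtain ⟨δ, hδ, hunif⟩ := Metric.uniformContinuousOn_iff.1
    (isCompact_Icc.uniformContinuousOn_of_continuous hcont) ε (half_pos (sub_pos.2 hend))
  have hmesh : Tendsto (fun n : ℕ => S / 2 ^ n) atTop (𝓝 0) :=
    tendsto_const_nhds.div_atTop (tendsto_pow_atTop_atTop_of_one_lt one_lt_two)
  filter_upwards [hmesh.eventually (gt_mem_nhds hδ)] with n hn hω
  simp only [overshoot, mem_iUnion, mem_inter_iff, mem_ofPred_eq, Finset.mem_range] at hω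
  obtain ⟨k, hk, ⟨hbefore, hcross⟩, -, hrefl⟩ := hω
  obtain ⟨j, rfl⟩ : ∃ j, k = j + 1 := Nat.exists_eq_add_one.2 <| Nat.pos_of_ne_zero <| by
    rintro rfl
    simp only [dyadicWalk_zero, Pi.zero_apply] at hcross
    linarith
  have hmem : ∀ i : ℕ, i ≤ 2 ^ n → (i : ℝ) * S / 2 ^ n ∈ Icc 0 S := fun i hi =>
    ⟨by positivity, natCast_mul_div_two_pow_le hS hi⟩
  have hstep := hunif _ (hmem (j + 1) (by omega)) _ (hmem j (by omega)) (by
    rw [Real.dist_eq, Nat.cast_succ, show ((j : ℝ) + 1) * S / 2 ^ n - j * S / 2 ^ n = S / 2 ^ n by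
      ring, abs_of_nonneg (by positivity)]
    exact hn)
  have hprev := hbefore j (by omega)
  rw [Real.dist_eq, abs_lt] at hstep
  rw [dyadicWalk_two_pow] at hrefl
  simp only [dyadicWalk] at hcross hrefl hprev
  linarith [hstep.2]

variable [MeasureSpace Ω]

lemma IsStandardBM.tendsto_measure_overshoot (hW : IsStandardBM W) (ha : 0 ≤ a) (hS : 0 ≤ S) :
    Tendsto (fun n => ℙ (overshoot W S a n)) atTop (𝓝 0) := by
  have := hW.isProbabilityMeasure
  have hlim := tendsto_measure_of_ae_tendsto_indicator_of_isFiniteMeasure (μ := ℙ) atTop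
    MeasurableSet.empty (fun n => measurableSet_overshoot (W := W) (S := S) (a := a) (n := n) hW) ?_
  · simpa using hlim
  filter_upwards [hW.cont] with ω hω
  simpa using eventually_notMem_overshoot ha hS (hω.mono Icc_subset_Ici_self)

theorem IsStandardBM.measure_iUnion_dyadicCrossing (hW : IsStandardBM W) (hS : 0 ≤ S)
    (ha : 0 ≤ a) :
    ℙ (⋃ n, dyadicCrossing W S a n) = 2 * gaussianReal 0 S.toNNReal (Ioi a) := by
  have hend : ℙ {ω | a < W S ω - W 0 ω} = gaussianReal 0 S.toNNReal (Ioi a) := by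
    have hlaw := hW.gauss_incr 0 S le_rfl hS
    have hZ : Measurable fun ω => W S ω - W 0 ω := (hW.meas S).sub (hW.meas 0)
    rw [sub_zero] at hlaw
    rw [← hlaw, Measure.map_apply hZ measurableSet_Ioi]
    rfl
  have hlim := (tendsto_measure_iUnion_atTop (μ := ℙ)
    (monotone_dyadicCrossing (W := W) (S := S) (a := a))).add (hW.tendsto_measure_overshoot ha hS)
  rw [add_zero] at hlim
  rw [← hend]
  refine tendsto_nhds_unique hlim ?_
  exact tendsto_const_nhds.congr fun n => (hW.measure_dyadicCrossing_add_overshoot hS).symm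

end Limit

section ReflectionPrinciple

variable {Ω : Type*} [MeasureSpace Ω] {W : ℝ → Ω → ℝ} {S a : ℝ}

theorem IsStandardBM.measure_forall_lt_add (hW : IsStandardBM W) (hS : 0 < S) (ha : 0 < a) :
    ℙ {ω | ∀ u ∈ Icc 0 S, W u ω < a} + 2 * gaussianReal 0 S.toNNReal (Ioi a) = 1 := by
  have := hW.isProbabilityMeasure
  have := nullSingletonClass_gaussianReal (μ := 0) (v := S.toNNReal) (by simpa using hS)
  set E := {ω | ∀ u ∈ Icc 0 S, W u ω < a}
  set C : ℝ → Set Ω := fun b => ⋃ n, dyadicCrossing W S b n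
  have hC : ∀ b, MeasurableSet (C b) := fun b =>
    MeasurableSet.iUnion fun n => measurableSet_dyadicCrossing hW
  have hupper : E ≤ᵐ[ℙ] (C a)ᶜ := by
    filter_upwards [hW.init] with ω h0 hE hCa
    obtain ⟨n, k, hk, hgt⟩ := mem_iUnion.1 hCa
    have := hE _ ⟨by positivity, natCast_mul_div_two_pow_le hS.le hk⟩
    simp only [dyadicWalk, h0, sub_zero] at hgt
    linarith
  have hlower : ∀ b < a, (C b)ᶜ ≤ᵐ[ℙ] E := fun b hb => by
    filter_upwards [hW.init, hW.cont] with ω h0 hcont hCb u hu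
    refine lt_of_le_of_lt ((hcont.mono Icc_subset_Ici_self).le_of_forall_dyadic_le hS
      (fun n k hk => ?_) hu) hb
    have : ¬ b < dyadicWalk W S n k ω := fun hgt => hCb (mem_iUnion.2 ⟨n, k, hk, hgt⟩)
    simpa [dyadicWalk, h0] using this
  refine le_antisymm ?_ ?_
  · calc ℙ E + 2 * gaussianReal 0 S.toNNReal (Ioi a) = ℙ E + ℙ (C a) := by
          rw [hW.measure_iUnion_dyadicCrossing hS.le ha.le]
      _ ≤ ℙ (C a)ᶜ + ℙ (C a) := add_le_add_left (measure_mono_ae hupper) _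
      _ = 1 := by rw [add_comm, prob_add_prob_compl (hC a)]
  · obtain ⟨b, hb_mono, hb_mem, hb_lim⟩ := exists_seq_strictMono_tendsto' ha
    have hν := tendsto_const_nhds (x := ℙ E) |>.add <| ENNReal.Tendsto.const_mul
      (tendsto_measure_Ioi_of_tendsto_of_lt (μ := gaussianReal 0 S.toNNReal) hb_mono.monotone
        (fun m => (hb_mem m).2) hb_lim)
      (Or.inr (ENNReal.ofNat_ne_top (n := 2)))
    refine ge_of_tendsto hν (Eventually.of_forall fun m => ?_)
    calc 1 = ℙ (C (b m))ᶜ + ℙ (C (b m)) := by rw [add_comm, prob_add_prob_compl (hC _)]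
      _ ≤ ℙ E + 2 * gaussianReal 0 S.toNNReal (Ioi (b m)) := by
          rw [hW.measure_iUnion_dyadicCrossing hS.le (hb_mem m).1.le]
          exact add_le_add_left (measure_mono_ae (hlower _ (hb_mem m).2)) _

theorem IsStandardBM.toReal_measure_forall_lt (hW : IsStandardBM W) (hS : 0 < S) (ha : 0 < a) :
    (ℙ {ω | ∀ u ∈ Icc 0 S, W u ω < a}).toReal = 2 * stdNormalCDF (a / √S) - 1 := by
  have := hW.isProbabilityMeasure
  have h := congrArg ENNReal.toReal (hW.measure_forall_lt_add hS ha)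
  rw [ENNReal.toReal_add (measure_ne_top _ _) (by finiteness), ENNReal.toReal_mul,
    ← measureReal_def (gaussianReal 0 S.toNNReal), gaussianReal_real_Ioi hS] at h
  simp only [ENNReal.toReal_ofNat, ENNReal.toReal_one] at h
  linarith

end ReflectionPrinciple

theorem bcp_growth_constant_transformed_boundary_general
    {Ω : Type*} [MeasureSpace Ω]
    (α β σ x₀ : ℝ) (hβ : 0 < β) (hσ : 0 < σ)
    (W : ℝ → Ω → ℝ) (hW : IsStandardBM W)
    (f : ℝ → ℝ → ℝ)
    (hf : ∀ t x : ℝ, f t x =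
      (Real.exp (β * t) / σ) * (Real.log x + (σ ^ 2 - 2 * α) / (2 * β)))
    (s : ℝ → ℝ)
    (hs : ∀ t : ℝ, s t = (Real.exp (2 * β * t) - 1) / (2 * β))
    (X : ℝ → Ω → ℝ)
    (hX : ∀ (t : ℝ) (ω : Ω), X t ω =
      Real.exp (σ * Real.exp (-β * t) * (f 0 x₀ + W (s t) ω) - (σ ^ 2 - 2 * α) / (2 * β)))
    (h : ℝ) (hh : Real.log x₀ + (σ ^ 2 - 2 * α) / (2 * β) < h)
    (T : ℝ) (hT : 0 < T) :
    (ℙ {ω : Ω | ∀ t ∈ Set.Icc (0 : ℝ) T,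
        X t ω < Real.exp (h * Real.exp (-β * t) - (σ ^ 2 - 2 * α) / (2 * β))}).toReal =
      2 * stdNormalCDF ((2 * β * (h - Real.log x₀) - σ ^ 2 + 2 * α) /
          (σ * Real.sqrt (2 * β * (Real.exp (2 * β * T) - 1)))) - 1 := by
  have hs_cont : Continuous s := by rw [funext hs]; fun_prop
  have hs_mono : Monotone s := fun t t' htt => by rw [hs, hs]; gcongr
  have hs0 : s 0 = 0 := by simp [hs]
  have hexp : 1 < Real.exp (2 * β * T) := Real.one_lt_exp_iff.2 (by positivity)
  have hS : 0 < s T := by rw [hs]; exact div_pos (by linarith) (by positivity)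
  have hf0 : f 0 x₀ = (Real.log x₀ + (σ ^ 2 - 2 * α) / (2 * β)) / σ := by
    rw [hf, mul_zero, Real.exp_zero, one_div_mul_eq_div]
  have ha : 0 < h / σ - f 0 x₀ := by
    rw [hf0, sub_pos]; exact div_lt_div_of_pos_right hh hσ
  have hevent : {ω | ∀ t ∈ Icc 0 T,
        X t ω < Real.exp (h * Real.exp (-β * t) - (σ ^ 2 - 2 * α) / (2 * β))} =
      {ω | ∀ u ∈ Icc 0 (s T), W u ω < h / σ - f 0 x₀} := by
    ext ω
    have htime := hs_cont.continuousOn.forall_mem_Icc_comp_iff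
      (p := fun u => W u ω < h / σ - f 0 x₀) hT.le (hs_mono.monotoneOn _)
    rw [hs0] at htime
    rw [mem_ofPred_eq, mem_ofPred_eq, ← htime]
    refine forall₂_congr fun t _ => ?_
    rw [hX, Real.exp_lt_exp, sub_lt_sub_iff_right, mul_right_comm,
      mul_lt_mul_iff_of_pos_right (Real.exp_pos _), ← lt_div_iff₀' hσ, lt_sub_iff_add_lt']
  rw [hevent, hW.toReal_measure_forall_lt hS ha, hs, hf0, growth_level_div_sqrt_eq hβ hσ hexp]

/-- Explicit one-sided boundary non-crossing probability for the growth process and the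
boundary `b(t) = exp(h·e^{−βt} − (σ²−2α)/(2β))`. -/
theorem bcp_growth_constant_transformed_boundary
    {Ω : Type*} [MeasureSpace Ω] [IsProbabilityMeasure (ℙ : Measure Ω)]
    (α β σ x₀ : ℝ) (hα : 0 < α) (hβ : 0 < β) (hσ : 0 < σ) (hx₀ : 0 < x₀)
    (W : ℝ → Ω → ℝ) (hW : IsStandardBM W)
    (f : ℝ → ℝ → ℝ)
    (hf : ∀ t x : ℝ, f t x =
      (Real.exp (β * t) / σ) * (Real.log x + (σ ^ 2 - 2 * α) / (2 * β)))
    (s : ℝ → ℝ)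
    (hs : ∀ t : ℝ, s t = (Real.exp (2 * β * t) - 1) / (2 * β))
    (X : ℝ → Ω → ℝ)
    (hX : ∀ (t : ℝ) (ω : Ω), X t ω =
      Real.exp (σ * Real.exp (-β * t) * (f 0 x₀ + W (s t) ω) - (σ ^ 2 - 2 * α) / (2 * β)))
    (h : ℝ) (hh : Real.log x₀ + (σ ^ 2 - 2 * α) / (2 * β) < h)
    (T : ℝ) (hT : 0 < T) :
    (ℙ {ω : Ω | ∀ t ∈ Set.Icc (0 : ℝ) T,
        X t ω < Real.exp (h * Real.exp (-β * t) - (σ ^ 2 - 2 * α) / (2 * β))}).toReal =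
      2 * stdNormalCDF ((2 * β * (h - Real.log x₀) - σ ^ 2 + 2 * α) /
          (σ * Real.sqrt (2 * β * (Real.exp (2 * β * T) - 1)))) - 1 :=
  bcp_growth_constant_transformed_boundary_general α β σ x₀ hβ hσ W hW f hf s hs X hX h hh T hT
end
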